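/- Let K be a compact subset of the cube [0,1]^Γ and suppose there are subsets Γ_{n,p} ⊆ Γ (n,p ∈ ℕ) such that ⋃_{n∈ℕ} Γ_{n,p} = Γ for every p ∈ ℕ and the pseudometric d_{Γ_{n,p}} (1/p)-fragments K for every n,p ∈ ℕ. Then K is quasi Radon-Nikodým compact: there exists a lower semicontinuous quasi metric on K which fragments K. -/

import Mathlib

open Set Topology Cardinal

/-- A map `f : X × X → ℝ` fragments the topological space `X` if for every nonempty
subset `L` of `X` and every `ε > 0` there is a nonempty relatively open subset of `L`
of `f`-diameter less than `ε`. -/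
def Fragments {X : Type*} [TopologicalSpace X] (f : X → X → ℝ) : Prop :=
  ∀ L : Set X, L.Nonempty → ∀ ε : ℝ, 0 < ε →
    ∃ V : Set X, IsOpen V ∧ (V ∩ L).Nonempty ∧
      ∀ x ∈ V ∩ L, ∀ y ∈ V ∩ L, f x y < ε

/-- `f` (defined on the ambient space `X`) fragments the subset `K`. -/
def FragmentsOn {X : Type*} [TopologicalSpace X] (f : X → X → ℝ) (K : Set X) : Prop :=
  ∀ L : Set X, L ⊆ K → L.Nonempty → ∀ ε : ℝ, 0 < ε →
    ∃ V : Set X, IsOpen V ∧ (V ∩ L).Nonempty ∧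
      ∀ x ∈ V ∩ L, ∀ y ∈ V ∩ L, f x y < ε

/-- A quasi metric: nonnegative, symmetric, and vanishing exactly on the diagonal. -/
def IsQuasiMetric {X : Type*} (f : X → X → ℝ) : Prop :=
  (∀ x y, 0 ≤ f x y) ∧ (∀ x y, f x y = f y x) ∧ (∀ x y, f x y = 0 ↔ x = y)

/-- A metric (as a two-variable real function): symmetric, vanishing exactly on the
diagonal, and satisfying the triangle inequality. -/
def IsMetricFun {X : Type*} (d : X → X → ℝ) : Prop :=
  (∀ x y, d x y = d y x) ∧ (∀ x y, d x y = 0 ↔ x = y) ∧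
    (∀ x y z, d x z ≤ d x y + d y z)

/-- Lower semicontinuity of a two-variable map for the product topology. -/
def LSC {X : Type*} [TopologicalSpace X] (f : X → X → ℝ) : Prop :=
  LowerSemicontinuous (fun p : X × X => f p.1 p.2)

/-- The pseudometric `d_A` on `[0,1]^Γ` given by `d_A(x,y) = sup_{γ ∈ A} |x_γ - y_γ|`. -/
noncomputable def dGamma {Γ : Type*} (A : Set Γ) (x y : Γ → ℝ) : ℝ :=
  ⨆ γ : A, |x γ - y γ|

/-- `f` (defined on the ambient space) Δ-fragments the subset `K`. -/
def DeltaFragmentsOn {X : Type*} [TopologicalSpace X] (f : X → X → ℝ) (K : Set X)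
    (Δ : ℝ) : Prop :=
  ∀ L : Set X, L ⊆ K → L.Nonempty →
    ∃ V : Set X, IsOpen V ∧ (V ∩ L).Nonempty ∧
      ∀ x ∈ V ∩ L, ∀ y ∈ V ∩ L, f x y ≤ Δ

/-!
Let `U_{n,p}` be the open set of pairs `(x, y)` with `|x_γ - y_γ| > 1/p` for some `γ ∈ Γ_{n,p}`.
These countably many sets separate the points of `K`, and the `1/p`-fragmentation by `d_{Γ_{n,p}}`
says that every nonempty `L ⊆ K` has a nonempty relatively open piece containing no pair of
`U_{n,p}`. With summable positive weights `w`, `f = ∑ w_{n,p} 1_{U_{n,p}}` is a lower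
semicontinuous quasi metric. Given `ε`, all but `ε` of the weight sits on finitely many indices,
and fragmenting successively for those finitely many sets gives a piece of `f`-diameter `< ε`.
-/

section Fragmentation

variable {X : Type*} [TopologicalSpace X]

def FragmentsRel (U : Set (X × X)) : Prop :=
  ∀ L : Set X, L.Nonempty →
    ∃ V : Set X, IsOpen V ∧ (V ∩ L).Nonempty ∧ ∀ x ∈ V ∩ L, ∀ y ∈ V ∩ L, (x, y) ∉ U

theorem fragmentsRel_empty : FragmentsRel (∅ : Set (X × X)) :=
  fun L hL => ⟨univ, isOpen_univ, by rwa [univ_inter], fun _ _ _ _ => notMem_empty _⟩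

theorem FragmentsRel.union {U W : Set (X × X)} (hU : FragmentsRel U) (hW : FragmentsRel W) :
    FragmentsRel (U ∪ W) := by
  intro L hL
  obtain ⟨V, hV, hVL, hVU⟩ := hU L hL
  obtain ⟨V', hV', hV'L, hV'W⟩ := hW (V ∩ L) hVL
  refine ⟨V' ∩ V, hV'.inter hV, by rwa [inter_assoc], ?_⟩
  rintro x ⟨⟨hxV', hxV⟩, hxL⟩ y ⟨⟨hyV', hyV⟩, hyL⟩ (hxy | hxy)
  · exact hVU x ⟨hxV, hxL⟩ y ⟨hyV, hyL⟩ hxy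
  · exact hV'W x ⟨hxV', hxV, hxL⟩ y ⟨hyV', hyV, hyL⟩ hxy

theorem fragmentsRel_biUnion_finset {ι : Type*} {U : ι → Set (X × X)} (s : Finset ι)
    (hU : ∀ i ∈ s, FragmentsRel (U i)) : FragmentsRel (⋃ i ∈ s, U i) := by
  classical
  induction s using Finset.induction_on with
  | empty => simpa using fragmentsRel_empty
  | insert i s _ ih =>
    rw [Finset.set_biUnion_insert]
    exact (hU i (s.mem_insert_self i)).union (ih fun j hj => hU j (Finset.mem_insert_of_mem hj))

end Fragmentation

theorem lowerSemicontinuous_tsum_of_nonneg {α ι : Type*} [TopologicalSpace α] {g : ι → α → ℝ}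
    (hg : ∀ i, LowerSemicontinuous (g i)) (hg0 : ∀ i x, 0 ≤ g i x)
    (hsum : ∀ x, Summable fun i => g i x) : LowerSemicontinuous fun x => ∑' i, g i x := by
  have hlub x := isLUB_hasSum (hg0 · x) (hsum x).hasSum
  simp_rw [← fun x => (hlub x).ciSup_eq]
  exact lowerSemicontinuous_ciSup (fun x => (hlub x).bddAbove)
    fun s => lowerSemicontinuous_sum fun i _ => hg i

section WeightedIndicatorSum

variable {X ι : Type*} (w : ι → ℝ) (U : ι → Set (X × X))

noncomputable def weightedIndicatorSum (x y : X) : ℝ :=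
  ∑' i, (U i).indicator (fun _ => w i) (x, y)

variable {w U}

theorem summable_weightedIndicator (hw : ∀ i, 0 ≤ w i) (hws : Summable w) (z : X × X) :
    Summable fun i => (U i).indicator (fun _ => w i) z :=
  hws.of_nonneg_of_le (fun i => indicator_nonneg (fun _ _ => hw i) z)
    (fun i => indicator_le_self' (fun _ _ => hw i) z)

theorem weightedIndicatorSum_nonneg (hw : ∀ i, 0 ≤ w i) (x y : X) :
    0 ≤ weightedIndicatorSum w U x y :=
  tsum_nonneg fun i => indicator_nonneg (fun _ _ => hw i) _

theorem weightedIndicatorSum_comm (hU : ∀ i x y, (x, y) ∈ U i → (y, x) ∈ U i) (x y : X) :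
    weightedIndicatorSum w U x y = weightedIndicatorSum w U y x := by
  refine tsum_congr fun i => ?_
  by_cases h : (x, y) ∈ U i
  · rw [indicator_of_mem h, indicator_of_mem (hU i x y h)]
  · rw [indicator_of_notMem h, indicator_of_notMem (mt (hU i y x) h)]

theorem weightedIndicatorSum_self (hU : ∀ i x, (x, x) ∉ U i) (x : X) :
    weightedIndicatorSum w U x x = 0 := by
  simp [weightedIndicatorSum, indicator_of_notMem (hU _ x)]

theorem weightedIndicatorSum_pos (hw : ∀ i, 0 < w i) (hws : Summable w) {x y : X} {i : ι}
    (hxy : (x, y) ∈ U i) : 0 < weightedIndicatorSum w U x y := by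
  have hw0 i := (hw i).le
  calc 0 < (U i).indicator (fun _ => w i) (x, y) := by rw [indicator_of_mem hxy]; exact hw i
    _ ≤ _ := (summable_weightedIndicator hw0 hws (x, y)).le_tsum i
        fun j _ => indicator_nonneg (fun _ _ => hw0 j) _

theorem weightedIndicatorSum_le_tsum_compl (hw : ∀ i, 0 ≤ w i) (hws : Summable w)
    (s : Finset ι) {x y : X} (hxy : ∀ i ∈ s, (x, y) ∉ U i) :
    weightedIndicatorSum w U x y ≤ ∑' i : {i // i ∉ s}, w i := by
  refine ((summable_weightedIndicator hw hws (x, y)).tsum_le_tsum (fun i => ?_)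
    (hws.indicator (↑s)ᶜ)).trans_eq (tsum_subtype _ w).symm
  by_cases hi : i ∈ s
  · rw [indicator_of_notMem (hxy i hi), indicator_of_notMem (not_not_intro hi)]
  · rw [indicator_of_mem (s := ((↑s)ᶜ : Set ι)) hi]
    exact indicator_le_self' (fun _ _ => hw i) _

theorem lsc_weightedIndicatorSum [TopologicalSpace X] (hw : ∀ i, 0 ≤ w i) (hws : Summable w)
    (hU : ∀ i, IsOpen (U i)) : LSC (weightedIndicatorSum w U) :=
  lowerSemicontinuous_tsum_of_nonneg (fun i => (hU i).lowerSemicontinuous_indicator (hw i))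
    (fun i _ => indicator_nonneg (fun _ _ => hw i) _) (summable_weightedIndicator hw hws)

theorem fragments_weightedIndicatorSum [TopologicalSpace X] (hw : ∀ i, 0 ≤ w i)
    (hws : Summable w) (hU : ∀ i, FragmentsRel (U i)) : Fragments (weightedIndicatorSum w U) := by
  intro L hL ε hε
  obtain ⟨s, hs⟩ : ∃ s : Finset ι, ∑' i : {i // i ∉ s}, w i < ε :=
    ((tendsto_order.1 (tendsto_tsum_compl_atTop_zero w)).2 ε hε).exists
  obtain ⟨V, hV, hVL, hVU⟩ := fragmentsRel_biUnion_finset s (fun i _ => hU i) L hL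
  refine ⟨V, hV, hVL, fun x hx y hy => (weightedIndicatorSum_le_tsum_compl hw hws s ?_).trans_lt hs⟩
  exact fun i hi hxy => hVU x hx y hy (mem_biUnion hi hxy)

end WeightedIndicatorSum

theorem exists_quasiMetric_lsc_fragments {X ι : Type*} [TopologicalSpace X] [Countable ι]
    (U : ι → Set (X × X)) (hopen : ∀ i, IsOpen (U i))
    (hsymm : ∀ i x y, (x, y) ∈ U i → (y, x) ∈ U i) (hdiag : ∀ i x, (x, x) ∉ U i)
    (hsep : ∀ x y, x ≠ y → ∃ i, (x, y) ∈ U i) (hfrag : ∀ i, FragmentsRel (U i)) :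
    ∃ f : X → X → ℝ, IsQuasiMetric f ∧ LSC f ∧ Fragments f := by
  obtain ⟨w, hw, c, hc, -⟩ := NNReal.exists_pos_sum_of_countable one_ne_zero ι
  have hw' i : (0 : ℝ) < w i := hw i
  have hws : Summable fun i => (w i : ℝ) := NNReal.summable_coe.2 hc.summable
  have hw0 i := (hw' i).le
  refine ⟨weightedIndicatorSum (fun i => (w i : ℝ)) U,
    ⟨weightedIndicatorSum_nonneg hw0, weightedIndicatorSum_comm hsymm, fun x y => ⟨?_, ?_⟩⟩,
    lsc_weightedIndicatorSum hw0 hws hopen, fragments_weightedIndicatorSum hw0 hws hfrag⟩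
  · contrapose!
    intro hxy
    obtain ⟨i, hi⟩ := hsep x y hxy
    exact (weightedIndicatorSum_pos hw' hws hi).ne'
  · rintro rfl
    exact weightedIndicatorSum_self hdiag x

section Coordinates

variable {Γ : Type*}

def coordSep (A : Set Γ) (δ : ℝ) : Set ((Γ → ℝ) × (Γ → ℝ)) :=
  ⋃ γ ∈ A, {z | δ < |z.1 γ - z.2 γ|}

theorem mem_coordSep {A : Set Γ} {δ : ℝ} {x y : Γ → ℝ} :
    (x, y) ∈ coordSep A δ ↔ ∃ γ ∈ A, δ < |x γ - y γ| := by
  simp [coordSep]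

theorem isOpen_coordSep (A : Set Γ) (δ : ℝ) : IsOpen (coordSep A δ) :=
  isOpen_biUnion fun γ _ => isOpen_lt continuous_const (by fun_prop)

theorem coordSep_swap {A : Set Γ} {δ : ℝ} {x y : Γ → ℝ} (h : (x, y) ∈ coordSep A δ) :
    (y, x) ∈ coordSep A δ := by
  simpa only [mem_coordSep, abs_sub_comm] using h

theorem self_notMem_coordSep {A : Set Γ} {δ : ℝ} (hδ : 0 ≤ δ) (x : Γ → ℝ) :
    (x, x) ∉ coordSep A δ := by
  simpa [mem_coordSep] using fun _ _ => hδ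

-- The cube bound keeps `dGamma` away from the junk value `⨆ = 0` of an unbounded family.
theorem abs_sub_le_dGamma {A : Set Γ} {x y : Γ → ℝ} (hx : ∀ γ, x γ ∈ Icc (0 : ℝ) 1)
    (hy : ∀ γ, y γ ∈ Icc (0 : ℝ) 1) {γ : Γ} (hγ : γ ∈ A) : |x γ - y γ| ≤ dGamma A x y := by
  refine le_ciSup (f := fun γ : A => |x γ - y γ|) ⟨1, ?_⟩ ⟨γ, hγ⟩
  rintro _ ⟨γ, rfl⟩
  exact abs_sub_le_of_nonneg_of_le (hx γ).1 (hx γ).2 (hy γ).1 (hy γ).2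

theorem fragmentsRel_coordSep {K : Set (Γ → ℝ)} (hcube : ∀ x ∈ K, ∀ γ, x γ ∈ Icc (0 : ℝ) 1)
    {A : Set Γ} {δ : ℝ} (h : DeltaFragmentsOn (dGamma A) K δ) :
    FragmentsRel (Prod.map (↑) (↑) ⁻¹' coordSep A δ : Set (K × K)) := by
  intro L hL
  obtain ⟨V, hV, ⟨_, hzV, z, hzL, rfl⟩, hVδ⟩ :=
    h (Subtype.val '' L) (Subtype.coe_image_subset K L) (hL.image _)
  refine ⟨Subtype.val ⁻¹' V, hV.preimage continuous_subtype_val, ⟨z, hzV, hzL⟩, ?_⟩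
  rintro x ⟨hxV, hxL⟩ y ⟨hyV, hyL⟩ hxy
  obtain ⟨γ, hγ, hδ⟩ := mem_coordSep.1 hxy
  have hd := hVδ x ⟨hxV, x, hxL, rfl⟩ y ⟨hyV, y, hyL, rfl⟩
  exact (hδ.trans_le (abs_sub_le_dGamma (hcube x x.2) (hcube y y.2) hγ)).not_ge hd

end Coordinates

theorem statement16_general {Γ : Type*} (K : Set (Γ → ℝ))
    (hcube : ∀ x ∈ K, ∀ γ, x γ ∈ Set.Icc (0 : ℝ) 1)
    (Γnp : ℕ → ℕ → Set Γ)
    (hcover : ∀ p, 0 < p → (⋃ n, Γnp n p) = Set.univ)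
    (hfrag : ∀ n p, 0 < p → DeltaFragmentsOn (dGamma (Γnp n p)) K ((p : ℝ)⁻¹)) :
    ∃ f : K → K → ℝ, IsQuasiMetric f ∧ LSC f ∧ Fragments f := by
  set U : ℕ × ℕ → Set (K × K) := fun q =>
    Prod.map (↑) (↑) ⁻¹' coordSep (Γnp q.1 (q.2 + 1)) ((q.2 + 1 : ℕ) : ℝ)⁻¹
  refine exists_quasiMetric_lsc_fragments U
    (fun q => (isOpen_coordSep _ _).preimage (by fun_prop))
    (fun q x y => coordSep_swap)
    (fun q x => self_notMem_coordSep (A := Γnp q.1 (q.2 + 1)) (by positivity) x.1)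
    (fun x y hxy => ?_) (fun q => fragmentsRel_coordSep hcube (hfrag _ _ q.2.succ_pos))
  obtain ⟨γ, hγ⟩ := Function.ne_iff.1 (Subtype.coe_injective.ne hxy)
  obtain ⟨p, hp⟩ := exists_nat_one_div_lt (abs_pos.2 (sub_ne_zero.2 hγ))
  obtain ⟨n, hn⟩ := mem_iUnion.1 ((hcover (p + 1) p.succ_pos).symm ▸ mem_univ γ)
  exact ⟨(n, p), mem_coordSep.2 ⟨γ, hn, by simpa using hp⟩⟩

/-- If `K ⊆ [0,1]^Γ` is compact and there are `Γ_{n,p} ⊆ Γ` with `⋃_n Γ_{n,p} = Γ` for each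
`p` and `d_{Γ_{n,p}}` (1/p)-fragmenting `K`, then `K` is quasi Radon-Nikodým compact. -/
theorem statement16 {Γ : Type*} (K : Set (Γ → ℝ))
    (hcube : ∀ x ∈ K, ∀ γ, x γ ∈ Set.Icc (0 : ℝ) 1) (hcomp : IsCompact K)
    (Γnp : ℕ → ℕ → Set Γ)
    (hcover : ∀ p, 0 < p → (⋃ n, Γnp n p) = Set.univ)
    (hfrag : ∀ n p, 0 < p → DeltaFragmentsOn (dGamma (Γnp n p)) K ((p : ℝ)⁻¹)) :
    ∃ f : K → K → ℝ, IsQuasiMetric f ∧ LSC f ∧ Fragments f :=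
  statement16_general K hcube Γnp hcover hfrag
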